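/- With a, x, y as in the generalized setting, for all natural numbers n and l: x_{n+l} · y_n = x_{2n+l} + (−a)^n · x_l. -/
import Mathlib


def x (a : ℕ) : ℕ → ℤ
  | 0 => 0
  | 1 => 1
  | n + 2 => x a (n + 1) + (a : ℤ) * x a n

def y (a : ℕ) : ℕ → ℤ
  | 0 => 2
  | 1 => 1
  | n + 2 => y a (n + 1) + (a : ℤ) * y a n

theorem stmt17 (a : ℕ) (ha : a ≠ 0) : ∀ n l : ℕ,
    x a (n + l) * y a n = x a (2 * n + l) + (-(a : ℤ)) ^ n * x a l := by
  have key : ∀ n : ℕ,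
      (∀ l, x a (n + l) * y a n = x a (2 * n + l) + (-(a : ℤ)) ^ n * x a l) ∧
      (∀ l, x a (n + 1 + l) * y a (n + 1) = x a (2 * (n + 1) + l) + (-(a : ℤ)) ^ (n + 1) * x a l) := by
    intro n
    induction n with
    | zero =>
      constructor
      · intro l; simp [y, x]; ring
      · intro l
        rw [show (0:ℕ) + 1 + l = l + 1 from by omega, show 2 * (0 + 1) + l = l + 2 from by omega]
        simp [y, x]
    | succ n ih =>
      obtain ⟨h0, h1⟩ := ih
      refine ⟨h1, fun l => ?_⟩
      have e1 := h1 (l + 1)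
      have e0 := h0 (l + 2)
      have hy : y a (n + 2) = y a (n + 1) + (a : ℤ) * y a n := rfl
      have hx12 : x a (n + 1 + (l + 1)) = x a (n + (l + 2)) := by congr 1; omega
      rw [← hx12] at e0
      have hx3 : x a (2 * (n + 2) + l) =
          x a (2 * (n + 1) + (l + 1)) + (a : ℤ) * x a (2 * n + (l + 2)) := by
        have : 2 * (n + 2) + l = (2 * n + l + 2) + 2 := by ring
        rw [this]
        show x a (2*n+l+2+1) + (a:ℤ) * x a (2*n+l+2) = _
        congr 2 <;> omega
      have hxl : x a (l + 2) = x a (l + 1) + (a : ℤ) * x a l := rfl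
      calc x a (n + 1 + 1 + l) * y a (n + 1 + 1)
          = x a (n + 1 + (l + 1)) * y a (n + 1) +
            (a : ℤ) * (x a (n + 1 + (l + 1)) * y a n) := by
              rw [show n + 1 + 1 + l = n + 1 + (l + 1) from by omega]
              rw [show y a (n + 1 + 1) = y a (n + 1) + (a : ℤ) * y a n from rfl]; ring
        _ = x a (2 * (n + 1 + 1) + l) + (-(a : ℤ)) ^ (n + 1 + 1) * x a l := by
              rw [e1, e0, show (2 * (n + 1 + 1) + l) = (2 * (n + 2) + l) from by omega, hx3, hxl]; ring
  intro n l
  exact (key n).1 l
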